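/- Let $s, t \in \mathbb{R}$ with $s + t > n/2$, and let $\varepsilon \in (0, s+t-n/2)$. Set $\sigma = \min\{s, t, s+t-n/2-\varepsilon\}$. Then there exists a constant $C = C(s,t,\varepsilon,n) > 0$ such that $(\langle\cdot\rangle^{-2s} * \langle\cdot\rangle^{-2t})(\xi) \leq C \langle\xi\rangle^{-2\sigma}$ for all $\xi \in \mathbb{R}^n$. -/

import Mathlib

/-!
Write `U = ⟨ξ - η⟩²`, `V = ⟨η⟩²`, `W = ⟨ξ⟩²`. The triangle inequality gives `U ≤ 2WV`,
`V ≤ 2WU` and `W ≤ 2U + 2V`, and from these alone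
`U^(-s) V^(-t) ≤ C W^(-σ) (U^(-a) + V^(-a))` with `a = s + t - max σ 0`:
if `s ≤ 0` this is Peetre's inequality `U ≤ 2WV`; if `s, t > 0` and `V ≤ U`, then `W ≤ 4U` and
one splits off `U^(-max σ 0)`. Since `σ < s + t - n/2`, we have `2a > n`, so `⟨·⟩^(-2a)` is
integrable, and by translation invariance both terms integrate to `∫ ⟨η⟩^(-2a) dη`.
-/

open MeasureTheory Real Module

section RealWeights

variable {s t σ a U V W : ℝ}

lemma rpow_neg_mul_rpow_neg_le_of_nonpos (hs : s ≤ 0) (hσs : σ ≤ s) (ha : a ≤ s + t)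
    (hU : 0 ≤ U) (hV : 1 ≤ V) (hW : 1 ≤ W) (hUV : U ≤ 2 * W * V) :
    U ^ (-s) * V ^ (-t) ≤ 2 ^ (-s) * W ^ (-σ) * V ^ (-a) := by
  have hV0 : 0 < V := by linarith
  calc U ^ (-s) * V ^ (-t) ≤ (2 * W * V) ^ (-s) * V ^ (-t) := by gcongr; linarith
    _ = 2 ^ (-s) * W ^ (-s) * V ^ (-(s + t)) := by
      rw [mul_rpow (by positivity) hV0.le, mul_rpow zero_le_two (by linarith), neg_add,
        rpow_add hV0]
      ring
    _ ≤ 2 ^ (-s) * W ^ (-σ) * V ^ (-a) := by gcongr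

lemma rpow_neg_mul_rpow_neg_le_of_le (hσ : 0 ≤ σ) (hσs : σ ≤ s) (ha : a ≤ s + t - σ)
    (hV : 1 ≤ V) (hVU : V ≤ U) (hW : 0 < W) (hWU : W ≤ 4 * U) :
    U ^ (-s) * V ^ (-t) ≤ 4 ^ σ * W ^ (-σ) * V ^ (-a) := by
  have hV0 : 0 < V := by linarith
  have hU0 : 0 < U := by linarith
  calc U ^ (-s) * V ^ (-t) = U ^ (-σ) * U ^ (-(s - σ)) * V ^ (-t) := by
        rw [← rpow_add hU0]; ring_nf
    _ ≤ (W / 4) ^ (-σ) * V ^ (-(s - σ)) * V ^ (-t) := by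
        gcongr ?_ * ?_ * _
        · exact rpow_le_rpow_of_nonpos (by positivity) (by linarith) (by linarith)
        · exact rpow_le_rpow_of_nonpos hV0 hVU (by linarith)
    _ = 4 ^ σ * W ^ (-σ) * V ^ (-(s + t - σ)) := by
        rw [div_rpow hW.le zero_le_four, rpow_neg zero_le_four, div_inv_eq_mul, mul_assoc,
          ← rpow_add hV0]
        ring_nf
    _ ≤ 4 ^ σ * W ^ (-σ) * V ^ (-a) := by gcongr

lemma rpow_neg_mul_rpow_neg_le (hσs : σ ≤ s) (hσt : σ ≤ t) (ha : a ≤ s + t - max σ 0)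
    (hU : 1 ≤ U) (hV : 1 ≤ V) (hW : 1 ≤ W)
    (hUb : U ≤ 2 * W * V) (hVb : V ≤ 2 * W * U) (hWb : W ≤ 2 * U + 2 * V) :
    U ^ (-s) * V ^ (-t) ≤
      (2 ^ (-s) + 2 ^ (-t) + 4 ^ max σ 0) * W ^ (-σ) * (U ^ (-a) + V ^ (-a)) := by
  have h2s : (0 : ℝ) < 2 ^ (-s) := by positivity
  have h2t : (0 : ℝ) < 2 ^ (-t) := by positivity
  have h4 : (0 : ℝ) < 4 ^ max σ 0 := by positivity
  have hWσ : 0 < W ^ (-σ) := by positivity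
  have hUa : 0 < U ^ (-a) := by positivity
  have hVa : 0 < V ^ (-a) := by positivity
  have ha' : a ≤ s + t := by linarith [le_max_right σ 0]
  rcases le_or_gt s 0 with hs | hs
  · calc U ^ (-s) * V ^ (-t) ≤ 2 ^ (-s) * W ^ (-σ) * V ^ (-a) :=
          rpow_neg_mul_rpow_neg_le_of_nonpos hs hσs ha' (by linarith) hV hW hUb
      _ ≤ _ := by gcongr <;> linarith
  rcases le_or_gt t 0 with ht | ht
  · calc U ^ (-s) * V ^ (-t) ≤ 2 ^ (-t) * W ^ (-σ) * U ^ (-a) := by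
          rw [mul_comm]
          exact rpow_neg_mul_rpow_neg_le_of_nonpos ht hσt (by linarith) (by linarith) hU hW hVb
      _ ≤ _ := by gcongr <;> linarith
  have hτW : W ^ (-max σ 0) ≤ W ^ (-σ) := by gcongr; exact le_max_left σ 0
  rcases le_total V U with hVU | hUV
  · calc U ^ (-s) * V ^ (-t) ≤ 4 ^ max σ 0 * W ^ (-max σ 0) * V ^ (-a) :=
          rpow_neg_mul_rpow_neg_le_of_le (le_max_right σ 0) (max_le hσs hs.le) ha hV hVU
            (by linarith) (by linarith)
      _ ≤ _ := by gcongr <;> linarith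
  · calc U ^ (-s) * V ^ (-t) ≤ 4 ^ max σ 0 * W ^ (-max σ 0) * U ^ (-a) := by
          rw [mul_comm]
          exact rpow_neg_mul_rpow_neg_le_of_le (le_max_right σ 0) (max_le hσt ht.le)
            (by linarith) hU hUV (by linarith) (by linarith)
      _ ≤ _ := by gcongr <;> linarith

end RealWeights

section NormBounds

variable {E : Type*} [SeminormedAddCommGroup E]

lemma sq_norm_add_le (x y : E) : ‖x + y‖ ^ 2 ≤ 2 * (‖x‖ ^ 2 + ‖y‖ ^ 2) :=
  (pow_le_pow_left₀ (norm_nonneg _) (norm_add_le x y) 2).trans add_sq_le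

lemma sq_norm_sub_le (x y : E) : ‖x - y‖ ^ 2 ≤ 2 * (‖x‖ ^ 2 + ‖y‖ ^ 2) := by
  simpa [sub_eq_add_neg] using sq_norm_add_le x (-y)

lemma one_add_norm_sq_rpow_mul_le {s t σ a : ℝ}
    (hσs : σ ≤ s) (hσt : σ ≤ t) (ha : a ≤ s + t - max σ 0) (ξ η : E) :
    (1 + ‖ξ - η‖ ^ 2) ^ (-s) * (1 + ‖η‖ ^ 2) ^ (-t) ≤
      (2 ^ (-s) + 2 ^ (-t) + 4 ^ max σ 0) * (1 + ‖ξ‖ ^ 2) ^ (-σ) *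
        ((1 + ‖η - ξ‖ ^ 2) ^ (-a) + (1 + ‖η‖ ^ 2) ^ (-a)) := by
  have hU := sq_norm_sub_le ξ η
  have hV := sq_norm_sub_le ξ (ξ - η)
  have hW := sq_norm_add_le (ξ - η) η
  rw [sub_sub_cancel] at hV
  rw [sub_add_cancel] at hW
  rw [norm_sub_rev η ξ]
  apply rpow_neg_mul_rpow_neg_le hσs hσt ha <;>
    nlinarith [sq_nonneg ‖ξ - η‖, mul_nonneg (sq_nonneg ‖ξ‖) (sq_nonneg ‖η‖),
      mul_nonneg (sq_nonneg ‖ξ‖) (sq_nonneg ‖ξ - η‖)]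

end NormBounds

lemma integrable_one_add_norm_sq_rpow_neg {E : Type*} [NormedAddCommGroup E] [NormedSpace ℝ E]
    [FiniteDimensional ℝ E] [MeasurableSpace E] [BorelSpace E] {μ : Measure E}
    [μ.IsAddHaarMeasure] {a : ℝ} (ha : (finrank ℝ E : ℝ) < 2 * a) :
    Integrable (fun x : E ↦ (1 + ‖x‖ ^ 2) ^ (-a)) μ := by
  simpa [neg_div] using integrable_rpow_neg_one_add_norm_sq (μ := μ) ha

lemma integral_le_of_le_mul_add_sub {G : Type*} [MeasurableSpace G] [AddGroup G]
    [MeasurableAdd G] {μ : Measure G} [μ.IsAddRightInvariant] {f g : G → ℝ} {c : ℝ} (ξ : G)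
    (hf : ∀ η, 0 ≤ f η) (hg : Integrable g μ) (hfg : ∀ η, f η ≤ c * (g (η - ξ) + g η)) :
    ∫ η, f η ∂μ ≤ c * (2 * ∫ η, g η ∂μ) := by
  have hgξ : Integrable (fun η ↦ g (η - ξ)) μ := hg.comp_sub_right ξ
  calc ∫ η, f η ∂μ ≤ ∫ η, c * (g (η - ξ) + g η) ∂μ :=
        integral_mono_of_nonneg (.of_forall hf) ((hgξ.add hg).const_mul c) (.of_forall hfg)
    _ = c * (2 * ∫ η, g η ∂μ) := by
        rw [integral_const_mul, integral_add hgξ hg, integral_sub_right_eq_self]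
        ring

theorem conv_japanese_bracket_decay_general (n : ℕ) (s t ε : ℝ) (hst : (n : ℝ) / 2 < s + t)
    (hε : 0 < ε)
    (σ : ℝ) (hσ : σ = min (min s t) (s + t - (n : ℝ) / 2 - ε)) :
    ∃ C : ℝ, 0 < C ∧ ∀ ξ : EuclideanSpace ℝ (Fin n),
      (∫ η : EuclideanSpace ℝ (Fin n), (1 + ‖ξ - η‖ ^ 2) ^ (-s) * (1 + ‖η‖ ^ 2) ^ (-t)) ≤
        C * (1 + ‖ξ‖ ^ 2) ^ (-σ) := by
  have hσs : σ ≤ s := hσ ▸ (min_le_left _ _).trans (min_le_left _ _)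
  have hσt : σ ≤ t := hσ ▸ (min_le_left _ _).trans (min_le_right _ _)
  have hσn : σ < s + t - n / 2 := hσ ▸ (min_le_right _ _).trans_lt (by linarith)
  have hn : (finrank ℝ (EuclideanSpace ℝ (Fin n)) : ℝ) < 2 * (s + t - max σ 0) := by
    rw [finrank_euclideanSpace_fin]
    linarith [max_lt hσn (by linarith : 0 < s + t - n / 2)]
  set C₀ : ℝ := 2 ^ (-s) + 2 ^ (-t) + 4 ^ max σ 0
  set K := ∫ x : EuclideanSpace ℝ (Fin n), (1 + ‖x‖ ^ 2) ^ (-(s + t - max σ 0))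
  have hK : 0 ≤ K := integral_nonneg fun x ↦ by positivity
  refine ⟨C₀ * (2 * K + 1), by positivity, fun ξ ↦ ?_⟩
  calc _ ≤ C₀ * (1 + ‖ξ‖ ^ 2) ^ (-σ) * (2 * K) :=
        integral_le_of_le_mul_add_sub ξ (fun η ↦ by positivity)
          (integrable_one_add_norm_sq_rpow_neg hn) (one_add_norm_sq_rpow_mul_le hσs hσt le_rfl ξ)
    _ = C₀ * (2 * K) * (1 + ‖ξ‖ ^ 2) ^ (-σ) := by ring
    _ ≤ C₀ * (2 * K + 1) * (1 + ‖ξ‖ ^ 2) ^ (-σ) := by gcongr; linarith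

/-- If `s + t > n/2` and `0 < ε < s + t - n/2`, with `σ = min {s, t, s+t-n/2-ε}`, then there
is `C > 0` such that `(⟨·⟩^(-2s) * ⟨·⟩^(-2t))(ξ) ≤ C ⟨ξ⟩^(-2σ)` for all `ξ`. -/
theorem conv_japanese_bracket_decay (n : ℕ) (s t ε : ℝ) (hst : (n : ℝ) / 2 < s + t)
    (hε : 0 < ε) (hε' : ε < s + t - (n : ℝ) / 2)
    (σ : ℝ) (hσ : σ = min (min s t) (s + t - (n : ℝ) / 2 - ε)) :
    ∃ C : ℝ, 0 < C ∧ ∀ ξ : EuclideanSpace ℝ (Fin n),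
      (∫ η : EuclideanSpace ℝ (Fin n), (1 + ‖ξ - η‖ ^ 2) ^ (-s) * (1 + ‖η‖ ^ 2) ^ (-t)) ≤
        C * (1 + ‖ξ‖ ^ 2) ^ (-σ) :=
  conv_japanese_bracket_decay_general n s t ε hst hε σ hσ
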